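/- Under assumptions (A1)–(A6), set c₀ = inf_N J. If every sequence (uₙ) ⊂ N with J(uₙ) → c₀ and ‖J'(uₙ)‖_{X*} → 0 has a subsequence that T-converges to some point of X, then there exists u ∈ N with J'(u) = 0 and J(u) = c₀; in particular the infimum of J over N is achieved by a critical point of J. -/

import Mathlib

/-!
Minimise `J` over `N` through the reduced functional `w ↦ J (m̂ w)` on the sphere of radius `r`
in `X⁺`, which `m̂` maps onto `N`. Under (A2), (A3), (A6) and weak sequential compactness of bounded
sets in the reflexive space `X`, `m̂` is continuous off `X̃`. Ekeland's variational principle gives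
almost-minimisers `wₙ` of the reduced functional that are almost critical; comparing `J` at
`m̂` of nearby sphere points with `J` on `X̂(wₙ)`, where `m̂ wₙ` is the maximum, turns this into
`‖J' (m̂ wₙ)‖ → 0`. By hypothesis a subsequence of this (PS)-sequence T-converges to some `v`; since
every point of `N` maximises `J` on its own `X̂`, `J v ≤ c₀`, and (A2), (A3) upgrade T-convergence
to norm convergence, so `v ∈ N` is a critical point with `J v = c₀`.
-/

open Filter Topology Set

section Ekeland

variable {α : Type*} [MetricSpace α] {f : α → ℝ} {ε : ℝ}

def improvementSet (f : α → ℝ) (ε : ℝ) (x : α) : Set α :=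
  {y | f y + ε * dist y x ≤ f x}

theorem self_mem_improvementSet (x : α) : x ∈ improvementSet f ε x := by
  simp [improvementSet]

theorem improvementSet_trans (hε : 0 ≤ ε) {x y z : α} (hy : y ∈ improvementSet f ε x)
    (hz : z ∈ improvementSet f ε y) : z ∈ improvementSet f ε x := by
  have := mul_le_mul_of_nonneg_left (dist_triangle z y x) hε
  simp only [improvementSet, mem_ofPred_eq] at hy hz ⊢
  linarith

theorem LowerSemicontinuous.isClosed_improvementSet (hf : LowerSemicontinuous f) (x : α) :
    IsClosed (improvementSet f ε x) :=
  (hf.add (continuous_const.mul (continuous_id.dist continuous_const)).lowerSemicontinuous)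
    |>.isClosed_preimage (f x)

theorem improvementSet_subset_closedBall (hε : 0 < ε) {x y : α} {η : ℝ}
    (hy : y ∈ improvementSet f ε x) (hmin : ∀ z ∈ improvementSet f ε x, f y < f z + η) :
    improvementSet f ε y ⊆ Metric.closedBall y (η / ε) := by
  intro z hz
  have := hmin z (improvementSet_trans hε.le hy hz)
  simp only [improvementSet, mem_ofPred_eq] at hz
  rw [Metric.mem_closedBall, le_div_iff₀ hε]
  linarith

/-- **Ekeland's variational principle**. -/
theorem LowerSemicontinuous.exists_le_forall_le_add_mul_dist [CompleteSpace α]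
    (hf : LowerSemicontinuous f) (hbdd : BddBelow (range f)) (hε : 0 < ε) (x₀ : α) :
    ∃ x, f x ≤ f x₀ ∧ ∀ y, f x ≤ f y + ε * dist y x := by
  set S := improvementSet f ε
  have exists_almost_min (k : ℕ) (x : α) : ∃ y ∈ S x, ∀ z ∈ S x, f y < f z + (2 : ℝ)⁻¹ ^ k := by
    obtain ⟨_, ⟨y, hy, rfl⟩, hlt⟩ := Real.lt_sInf_add_pos (s := f '' S x)
      ⟨f x, x, self_mem_improvementSet x, rfl⟩ (by positivity : (0 : ℝ) < (2 : ℝ)⁻¹ ^ k)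
    refine ⟨y, hy, fun z hz => hlt.trans_le ?_⟩
    gcongr
    exact csInf_le (hbdd.mono (image_subset_range _ _)) ⟨z, hz, rfl⟩
  choose next next_mem next_lt using exists_almost_min
  set x : ℕ → α := fun k => Nat.rec x₀ next k
  have S_antitone : Antitone fun k => S (x k) :=
    antitone_nat_of_succ_le fun k _ hz => improvementSet_trans hε.le (next_mem k (x k)) hz
  have S_ball (k : ℕ) : S (x (k + 1)) ⊆ Metric.closedBall (x (k + 1)) ((2 : ℝ)⁻¹ ^ k / ε) :=
    improvementSet_subset_closedBall hε (next_mem k (x k)) (next_lt k (x k))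
  have S_bdd (k : ℕ) : Bornology.IsBounded (S (x (k + 1))) :=
    Metric.isBounded_closedBall.subset (S_ball k)
  have diam_tendsto : Tendsto (fun k => Metric.diam (S (x (k + 1)))) atTop (𝓝 0) := by
    refine squeeze_zero (fun _ => Metric.diam_nonneg)
      (fun k => Metric.diam_le_of_subset_closedBall (by positivity) (S_ball k)) ?_
    simpa using ((tendsto_pow_atTop_nhds_zero_of_lt_one (by norm_num) (by norm_num :
      (2 : ℝ)⁻¹ < 1)).div_const ε).const_mul 2
  obtain ⟨x', hx'⟩ := Metric.nonempty_iInter_of_nonempty_biInter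
    (fun k => hf.isClosed_improvementSet _) S_bdd
    (fun N => ⟨x (N + 1), mem_iInter₂.2 fun n hn =>
      S_antitone (Nat.succ_le_succ hn) (self_mem_improvementSet _)⟩) diam_tendsto
  rw [mem_iInter] at hx'
  refine ⟨x', ?_, fun y => ?_⟩
  · have : f x' + ε * dist x' x₀ ≤ f x₀ := S_antitone (Nat.zero_le 1) (hx' 0)
    nlinarith [dist_nonneg (x := x') (y := x₀)]
  · by_contra! hy
    -- `y` would lie in all the nested sets, whose diameters tend to zero
    have hyS (k : ℕ) : y ∈ S (x (k + 1)) := improvementSet_trans hε.le (hx' k) hy.le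
    have hdist : dist y x' = 0 := le_antisymm (ge_of_tendsto' diam_tendsto fun k =>
      Metric.dist_le_diam_of_mem (S_bdd k) (hyS k) (hx' k)) dist_nonneg
    rw [dist_eq_zero.1 hdist, dist_self] at hy
    linarith

end Ekeland

theorem TopologicalSpace.IsSeparable.exists_seq_strongDual_eq_zero_imp
    {X : Type*} [NormedAddCommGroup X] [NormedSpace ℝ X] {s : Set X}
    (hs : TopologicalSpace.IsSeparable s) :
    ∃ ψ : ℕ → StrongDual ℝ X, ∀ v ∈ s, (∀ n, ψ n v = 0) → v = 0 := by
  obtain ⟨c, hc, hsc⟩ := hs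
  obtain ⟨e, he⟩ := (hc.insert 0).exists_eq_range (insert_nonempty _ _)
  choose ψ hψ_norm hψ_e using fun n => exists_dual_vector'' ℝ (e n)
  refine ⟨ψ, fun v hv hψv => ?_⟩
  by_contra hv0
  have hv_pos : 0 < ‖v‖ := norm_pos_iff.2 hv0
  obtain ⟨_, ⟨n, rfl⟩, hvn⟩ : ∃ x ∈ range e, dist v x < ‖v‖ / 2 :=
    Metric.mem_closure_iff.1 (closure_mono (he ▸ subset_insert 0 c) (hsc hv)) _ (by positivity)
  rw [dist_eq_norm] at hvn
  have h_en : ‖e n‖ ≤ ‖e n - v‖ := by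
    calc ‖e n‖ = ψ n (e n - v) := by simp [hψ_e, hψv]
      _ ≤ ‖ψ n (e n - v)‖ := Real.le_norm_self _
      _ ≤ ‖ψ n‖ * ‖e n - v‖ := (ψ n).le_opNorm _
      _ ≤ ‖e n - v‖ := mul_le_of_le_one_left (norm_nonneg _) (hψ_norm n)
  have := norm_le_norm_add_norm_sub' v (e n)
  rw [norm_sub_rev] at h_en
  linarith

theorem isCompact_closure_toWeakSpace_image {X : Type*} [NormedAddCommGroup X] [NormedSpace ℝ X]
    (hrefl : Function.Surjective (NormedSpace.inclusionInDoubleDual ℝ X)) {s : Set X}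
    (hs : Bornology.IsBounded s) : IsCompact (closure (toWeakSpace ℝ X '' s)) := by
  refine NormedSpace.isCompact_closure_of_isBounded ℝ X _
    (by rwa [(toWeakSpace ℝ X).injective.preimage_image]) fun F _ => ?_
  obtain ⟨x, hx⟩ := hrefl (WeakDual.toStrongDual F)
  exact ⟨toWeakSpace ℝ X x, DFunLike.ext _ _ fun ψ => by
    change _ = WeakDual.toStrongDual F ψ
    rw [← hx]
    rfl⟩

theorem exists_subseq_weakly_tendsto_of_isBounded {X : Type*} [NormedAddCommGroup X]
    [NormedSpace ℝ X] (hrefl : Function.Surjective (NormedSpace.inclusionInDoubleDual ℝ X))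
    {y : ℕ → X} (hy : Bornology.IsBounded (range y)) :
    ∃ (φ : ℕ → ℕ) (v : X), StrictMono φ ∧
      ∀ ψ : StrongDual ℝ X, Tendsto (fun k => ψ (y (φ k))) atTop (𝓝 (ψ v)) := by
  set T := toWeakSpace ℝ X
  have eval_continuous (ψ : StrongDual ℝ X) : Continuous fun x : WeakSpace ℝ X => ψ (T.symm x) :=
    WeakBilin.eval_continuous (topDualPairing ℝ X).flip ψ
  set Y : Submodule ℝ X := (Submodule.span ℝ (range y)).topologicalClosure
  obtain ⟨ψ, hψ⟩ : ∃ ψ : ℕ → StrongDual ℝ X, ∀ v ∈ Y, (∀ n, ψ n v = 0) → v = 0 := by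
    refine TopologicalSpace.IsSeparable.exists_seq_strongDual_eq_zero_imp ?_
    rw [Submodule.topologicalClosure_coe]
    exact (countable_range y).isSeparable.span.closure
  set K := closure (T '' range y)
  have : CompactSpace K :=
    isCompact_iff_compactSpace.1 (isCompact_closure_toWeakSpace_image hrefl hy)
  -- by Mazur, `K` stays in the separable subspace `Y`, on which the `ψ n` separate points
  have hKY : K ⊆ T '' Y := by
    calc K ⊆ closure (T '' Y) := closure_mono <| image_mono <|
          Submodule.subset_span.trans (Submodule.le_topologicalClosure _)
      _ = T '' Y := by
        rw [← Y.convex.toWeakSpace_closure ℝ,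
          (Submodule.isClosed_topologicalClosure _ : IsClosed (Y : Set X)).closure_eq]
  have : TopologicalSpace.MetrizableSpace K := by
    let Φ : K → ℕ → ℝ := fun F n => ψ n (T.symm F)
    have hΦ : Continuous Φ :=
      continuous_pi fun n => (eval_continuous (ψ n)).comp continuous_subtype_val
    refine (hΦ.isClosedEmbedding fun F G hFG => ?_).isEmbedding.metrizableSpace
    obtain ⟨v, hv, hvF⟩ := hKY F.2
    obtain ⟨w, hw, hwG⟩ := hKY G.2
    have : v - w = 0 := hψ _ (Y.sub_mem hv hw) fun n => by
      have := congrFun hFG n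
      simp only [Φ, ← hvF, ← hwG, LinearEquiv.symm_apply_apply] at this
      rw [map_sub, this, sub_self]
    exact Subtype.ext (by rw [← hvF, ← hwG, sub_eq_zero.1 this])
  obtain ⟨a, -, φ, hφ, ha⟩ := isCompact_univ.tendsto_subseq (x := fun k =>
    (⟨T (y k), subset_closure (mem_image_of_mem T (mem_range_self k))⟩ : K)) fun k => mem_univ _
  exact ⟨φ, T.symm a, hφ, fun χ =>
    ((eval_continuous χ).tendsto _).comp ((continuous_subtype_val.tendsto a).comp ha)⟩

theorem exists_tendsto_of_weakly_tendsto_smul {X : Type*} [NormedAddCommGroup X]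
    [NormedSpace ℝ X] {a : ℕ → ℝ} {x : ℕ → X} {x₀ y : X} (hx : Tendsto x atTop (𝓝 x₀))
    (hx₀ : x₀ ≠ 0) (hy : ∀ ψ : StrongDual ℝ X, Tendsto (fun k => ψ (a k • x k)) atTop (𝓝 (ψ y))) :
    ∃ t, Tendsto a atTop (𝓝 t) ∧ y = t • x₀ := by
  obtain ⟨ψ, -, hψx₀⟩ := exists_dual_vector ℝ x₀ (norm_ne_zero_iff.2 hx₀)
  have hψx : Tendsto (fun k => ψ (x k)) atTop (𝓝 ‖x₀‖) := by
    have := (ψ.continuous.tendsto _).comp hx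
    rwa [hψx₀] at this
  have ha : Tendsto a atTop (𝓝 (ψ y / ‖x₀‖)) := by
    refine ((hy ψ).div hψx (norm_ne_zero_iff.2 hx₀)).congr' ?_
    filter_upwards [hψx.eventually_ne (norm_ne_zero_iff.2 hx₀)] with k hk
    simp [mul_div_cancel_right₀ _ hk]
  refine ⟨_, ha, (SeparatingDual.eq_iff_forall_dual_eq (R := ℝ)).2 fun χ => ?_⟩
  exact tendsto_nhds_unique (hy χ) ((χ.continuous.tendsto _).comp (ha.smul hx))

theorem eq_norm_div_norm_smul_of_eq_smul {X : Type*} [NormedAddCommGroup X] [NormedSpace ℝ X]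
    {x y : X} {a : ℝ} (ha : 0 ≤ a) (h : y = a • x) : y = (‖y‖ / ‖x‖) • x := by
  rcases eq_or_ne x 0 with rfl | hx
  · simp [h]
  · rw [h, norm_smul, Real.norm_of_nonneg ha, mul_div_cancel_right₀ _ (norm_ne_zero_iff.2 hx)]

theorem norm_smul_div_norm_sub_le {X : Type*} [NormedAddCommGroup X] [NormedSpace ℝ X]
    {r : ℝ} {w : X} (hw : ‖w‖ = r) (x : X) : ‖(r / ‖x‖) • x - w‖ ≤ 2 * ‖x - w‖ := by
  have h_radial : ‖(r / ‖x‖) • x - x‖ ≤ ‖x - w‖ := by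
    rcases eq_or_ne x 0 with rfl | hx
    · simp
    · have hx' : ‖x‖ ≠ 0 := norm_ne_zero_iff.2 hx
      calc ‖(r / ‖x‖) • x - x‖ = ‖(r / ‖x‖ - 1) • x‖ := by rw [sub_smul, one_smul]
        _ = |(r / ‖x‖ - 1) * ‖x‖| := by
            rw [norm_smul, Real.norm_eq_abs, abs_mul, abs_norm]
        _ = |r - ‖x‖| := by rw [sub_mul, div_mul_cancel₀ _ hx', one_mul]
        _ ≤ ‖x - w‖ := by rw [← hw, abs_sub_comm]; exact abs_norm_sub_norm_le x w
  calc ‖(r / ‖x‖) • x - w‖ ≤ ‖(r / ‖x‖) • x - x‖ + ‖x - w‖ :=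
        norm_sub_le_norm_sub_add_norm_sub _ _ _
    _ ≤ 2 * ‖x - w‖ := by linarith

theorem HasStrictFDerivAt.neg_le_mul_apply_of_seq {E : Type*} [NormedAddCommGroup E]
    [NormedSpace ℝ E] {f : E → ℝ} {f' : E →L[ℝ] ℝ} {p z : E} (hf : HasStrictFDerivAt f f' p)
    {a : ℕ → E} {t c : ℕ → ℝ} {c₀ K : ℝ} (ha : Tendsto a atTop (𝓝 p))
    (ht : Tendsto t atTop (𝓝 0)) (ht0 : ∀ n, 0 < t n) (hc : Tendsto c atTop (𝓝 c₀))
    (hK : ∀ᶠ n in atTop, -(K * t n) ≤ f (a n) - f (a n - (t n * c n) • z)) :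
    -K ≤ c₀ * f' z := by
  set h : ℕ → E := fun n => (t n * c n) • z
  have hh : Tendsto h atTop (𝓝 0) := by simpa using (ht.mul hc).smul_const z
  have h_pair : Tendsto (fun n => (a n, a n - h n)) atTop (𝓝 (p, p)) := by
    simpa using ha.prodMk_nhds (ha.sub hh)
  have h_rem : (fun n => f (a n) - f (a n - h n) - f' (h n)) =o[atTop] t := by
    have h_bdd : (fun n => c n • z) =O[atTop] (fun _ => (1 : ℝ)) := (hc.smul_const z).isBigO_one ℝ
    have h_O : (fun n => a n - (a n - h n)) =O[atTop] t := by
      simpa [h, mul_smul] using (Asymptotics.isBigO_refl t atTop).smul h_bdd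
    exact ((hf.isLittleO.comp_tendsto h_pair).trans_isBigO h_O).congr_left fun n => by simp
  have h_quot : Tendsto (fun n => (f (a n) - f (a n - h n)) / t n) atTop (𝓝 (0 + c₀ * f' z)) := by
    refine (h_rem.tendsto_div_nhds_zero.add (hc.mul_const (f' z))).congr fun n => ?_
    simp only [h, map_smul, smul_eq_mul]
    field_simp [(ht0 n).ne']
    ring
  rw [zero_add] at h_quot
  refine ge_of_tendsto h_quot (hK.mono fun n hn => ?_)
  rw [le_div_iff₀ (ht0 n)]
  linarith

theorem ContinuousLinearMap.norm_le_div_of_forall_neg_mul_le {E : Type*} [NormedAddCommGroup E]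
    [NormedSpace ℝ E] {L : E →L[ℝ] ℝ} {s C : ℝ} (hs : 0 < s) (hC : 0 ≤ C)
    (h : ∀ z, -(C * ‖z‖) ≤ s * L z) : ‖L‖ ≤ C / s := by
  refine L.opNorm_le_bound (div_nonneg hC hs.le) fun z => ?_
  have h₁ := h z
  have h₂ := h (-z)
  rw [map_neg, norm_neg] at h₂
  rw [div_mul_eq_mul_div, le_div_iff₀ hs, Real.norm_eq_abs]
  cases abs_cases (L z) <;> nlinarith

namespace NehariPankov

variable {X : Type*} [NormedAddCommGroup X] [NormedSpace ℝ X] {Xp Xt : Submodule ℝ X}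
  {P : X →L[ℝ] X} {I J : X → ℝ} {J' : X → X →L[ℝ] ℝ} {m : X → X} {δ r : ℝ}

def TTendsto (P : X →L[ℝ] X) (u : ℕ → X) (v : X) : Prop :=
  Tendsto (fun n => P (u n)) atTop (𝓝 (P v)) ∧
    ∀ ψ : X →L[ℝ] ℝ, Tendsto (fun n => ψ (u n - P (u n))) atTop (𝓝 (ψ (v - P v)))

def nehariPankov (Xt : Submodule ℝ X) (J' : X → X →L[ℝ] ℝ) : Set X :=
  {u | u ∉ Xt ∧ J' u u = 0 ∧ ∀ v ∈ Xt, J' u v = 0}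

/-- The paper's `X(u) = ℝu ⊕ X̃`. -/
def lineAdd (Xt : Submodule ℝ X) (u : X) : Set X :=
  {z | ∃ t : ℝ, ∃ v ∈ Xt, z = t • u + v}

/-- The paper's `X̂(u) = [0,∞)u ⊕ X̃`. -/
def rayAdd (Xt : Submodule ℝ X) (u : X) : Set X :=
  {w | ∃ t : ℝ, 0 ≤ t ∧ ∃ v ∈ Xt, w = t • u + v}

theorem mem_of_proj_eq_zero (hQm : ∀ x, x - P x ∈ Xt) {x : X} (hx : P x = 0) : x ∈ Xt := by
  simpa [hx] using hQm x

theorem notMem_of_mem_of_norm_eq (hPp : ∀ x ∈ Xp, P x = x) (hPt : ∀ x ∈ Xt, P x = 0)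
    (hr : 0 < r) {x : X} (hx : x ∈ Xp) (hxr : ‖x‖ = r) : x ∉ Xt := fun hxt => by
  rw [← hPp x hx, hPt x hxt, norm_zero] at hxr
  exact hr.ne hxr

theorem mem_rayAdd_of_proj_eq_smul (hQm : ∀ x, x - P x ∈ Xt) {u w : X} {t : ℝ} (ht : 0 ≤ t)
    (hw : P w = t • P u) : w ∈ rayAdd Xt u :=
  ⟨t, ht, w - t • u, mem_of_proj_eq_zero hQm (by simp [hw]), by abel⟩

theorem exists_proj_eq_smul_of_mem_rayAdd (hPt : ∀ x ∈ Xt, P x = 0) {u w : X}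
    (hw : w ∈ rayAdd Xt u) : ∃ t : ℝ, 0 ≤ t ∧ P w = t • P u := by
  obtain ⟨t, ht, v, hv, rfl⟩ := hw
  exact ⟨t, ht, by simp [hPt v hv]⟩

theorem mhat_mem_nehariPankov (hPt : ∀ x ∈ Xt, P x = 0) (hδ : 0 < δ)
    (hm_lb : ∀ u ∉ Xt, δ ≤ ‖P (m u)‖) (hm_mem : ∀ u ∉ Xt, m u ∈ rayAdd Xt u)
    (hm_crit : ∀ u ∉ Xt, ∀ z ∈ lineAdd Xt u, J' (m u) z = 0) {u : X} (hu : u ∉ Xt) :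
    m u ∈ nehariPankov Xt J' := by
  refine ⟨fun h => ?_, ?_, fun v hv => hm_crit u hu v ⟨0, v, hv, by simp⟩⟩
  · have := hm_lb u hu
    rw [hPt _ h, norm_zero] at this
    linarith
  · obtain ⟨t, -, v, hv, h⟩ := hm_mem u hu
    exact hm_crit u hu _ ⟨t, v, hv, h⟩

/-- A point `w` of the Nehari–Pankov set is critical for `J` on `X(w)`, which is `X(u)` when
`w ∈ X̂(u) \ X̃`; so the uniqueness in (A5) identifies it with `m̂(u)`. -/
theorem mhat_eq_of_mem_rayAdd
    (hm_unique : ∀ u ∉ Xt, ∀ w ∈ rayAdd Xt u, w ≠ 0 →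
      (∀ z ∈ lineAdd Xt u, J' w z = 0) → w = m u)
    {u w : X} (hu : u ∉ Xt) (hw : w ∈ nehariPankov Xt J') (hwu : w ∈ rayAdd Xt u) : m u = w := by
  obtain ⟨hwXt, hww, hwXt'⟩ := hw
  refine (hm_unique u hu w hwu (fun h => hwXt (h ▸ Xt.zero_mem)) ?_).symm
  obtain ⟨t, -, v, hv, rfl⟩ := hwu
  have ht : t ≠ 0 := by
    rintro rfl
    exact hwXt (by simpa using hv)
  rintro _ ⟨s, v', hv', rfl⟩
  have : s • u + v' = (s / t) • (t • u + v) + (v' - (s / t) • v) := by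
    rw [smul_add, smul_smul, div_mul_cancel₀ _ ht]
    abel
  rw [this, map_add, map_smul, hww, hwXt' _ (Xt.sub_mem hv' (Xt.smul_mem _ hv)), smul_zero,
    add_zero]

theorem mhat_eq_self
    (hm_unique : ∀ u ∉ Xt, ∀ w ∈ rayAdd Xt u, w ≠ 0 →
      (∀ z ∈ lineAdd Xt u, J' w z = 0) → w = m u)
    {u : X} (hu : u ∈ nehariPankov Xt J') : m u = u :=
  mhat_eq_of_mem_rayAdd hm_unique hu.1 hu ⟨1, zero_le_one, 0, Xt.zero_mem, by simp⟩

theorem le_norm_proj_of_mem_nehariPankov (hm_lb : ∀ u ∉ Xt, δ ≤ ‖P (m u)‖)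
    (hm_unique : ∀ u ∉ Xt, ∀ w ∈ rayAdd Xt u, w ≠ 0 →
      (∀ z ∈ lineAdd Xt u, J' w z = 0) → w = m u)
    {u : X} (hu : u ∈ nehariPankov Xt J') : δ ≤ ‖P u‖ :=
  (hm_lb u hu.1).trans_eq (by rw [mhat_eq_self hm_unique hu])

theorem le_J_mhat (hm_max : ∀ u ∉ Xt, ∀ w ∈ rayAdd Xt u, w ≠ m u → J w < J (m u)) {u w : X}
    (hu : u ∉ Xt) (hw : w ∈ rayAdd Xt u) : J w ≤ J (m u) := by
  rcases eq_or_ne w (m u) with rfl | hne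
  exacts [le_rfl, (hm_max u hu w hw hne).le]

theorem J_pos_of_mem_nehariPankov (hJ0 : J 0 = 0) (hm_ne : ∀ u ∉ Xt, m u ≠ 0)
    (hm_unique : ∀ u ∉ Xt, ∀ w ∈ rayAdd Xt u, w ≠ 0 →
      (∀ z ∈ lineAdd Xt u, J' w z = 0) → w = m u)
    (hm_max : ∀ u ∉ Xt, ∀ w ∈ rayAdd Xt u, w ≠ m u → J w < J (m u)) {u : X}
    (hu : u ∈ nehariPankov Xt J') : 0 < J u := by
  have := hm_max u hu.1 0 ⟨0, le_rfl, 0, Xt.zero_mem, by simp⟩ (hm_ne u hu.1).symm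
  rwa [hJ0, mhat_eq_self hm_unique hu] at this

theorem nonempty_nehariPankov (hPp : ∀ x ∈ Xp, P x = x) (hPt : ∀ x ∈ Xt, P x = 0)
    (hmN : ∀ u ∉ Xt, m u ∈ nehariPankov Xt J') {a : ℝ} (hr : 0 < r)
    (ha_def : a = sInf (J '' {x : X | x ∈ Xp ∧ ‖x‖ = r})) (ha : 0 < a) :
    (nehariPankov Xt J').Nonempty := by
  -- `sInf ∅ = 0`, so (A4) forces the sphere of radius `r` in `X⁺` to be nonempty
  obtain ⟨x, hx, hxr⟩ : {x : X | x ∈ Xp ∧ ‖x‖ = r}.Nonempty := by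
    by_contra h
    rw [not_nonempty_iff_eq_empty.1 h, image_empty, Real.sInf_empty] at ha_def
    exact ha.ne' ha_def
  exact ⟨m x, hmN x (notMem_of_mem_of_norm_eq hPp hPt hr hx hxr)⟩

theorem TTendsto.tendsto (hJI : ∀ x, J x = 1 / 2 * ‖P x‖ ^ 2 - I x)
    (hA2 : ∀ u v, TTendsto P u v → ∀ b < I v, ∀ᶠ n in atTop, b < I (u n))
    (hA3 : ∀ u v, TTendsto P u v → Tendsto (fun n => I (u n)) atTop (𝓝 (I v)) →
      Tendsto u atTop (𝓝 v))
    {u : ℕ → X} {v : X} (huv : TTendsto P u v) (hJ : ∀ b < J v, ∀ᶠ n in atTop, b < J (u n)) :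
    Tendsto u atTop (𝓝 v) := by
  refine hA3 u v huv (tendsto_order.2 ⟨hA2 u v huv, fun b hb => ?_⟩)
  have hP : Tendsto (fun n => 1 / 2 * ‖P (u n)‖ ^ 2) atTop (𝓝 (1 / 2 * ‖P v‖ ^ 2)) :=
    (huv.1.norm.pow 2).const_mul _
  filter_upwards [hP.eventually (gt_mem_nhds (by linarith : 1 / 2 * ‖P v‖ ^ 2 <
      1 / 2 * ‖P v‖ ^ 2 + (b - I v) / 2)), hJ (J v - (b - I v) / 2) (by linarith)] with n h₁ h₂
  linarith [hJI v, hJI (u n)]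

theorem exists_subseq_TTendsto_mhat
    (hrefl : Function.Surjective (NormedSpace.inclusionInDoubleDual ℝ X))
    (hPt : ∀ x ∈ Xt, P x = 0) (hQm : ∀ x, x - P x ∈ Xt) (hm_mem : ∀ u ∉ Xt, m u ∈ rayAdd Xt u)
    (hm_bdd : ∀ K : Set X, IsCompact K → (∀ x ∈ K, x ∉ Xt) →
      Bornology.IsBounded (m '' K))
    {v : ℕ → X} {u₀ : X} (hv : Tendsto v atTop (𝓝 u₀)) (hvXt : ∀ k, v k ∉ Xt) (hu₀ : u₀ ∉ Xt) :
    ∃ (φ : ℕ → ℕ) (x : X), StrictMono φ ∧ TTendsto P (fun k => m (v (φ k))) x ∧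
      x ∈ rayAdd Xt u₀ := by
  have hbdd : Bornology.IsBounded (range (m ∘ v)) := by
    refine (hm_bdd _ hv.isCompact_insert_range ?_).subset ?_
    · rintro x (rfl | ⟨k, rfl⟩)
      exacts [hu₀, hvXt k]
    · rintro _ ⟨k, rfl⟩
      exact mem_image_of_mem m (mem_insert_of_mem _ (mem_range_self k))
  obtain ⟨φ, x, hφ, hx⟩ := exists_subseq_weakly_tendsto_of_isBounded hrefl hbdd
  choose s hs0 hs using fun k => exists_proj_eq_smul_of_mem_rayAdd hPt (hm_mem _ (hvXt k))
  have hPv : Tendsto (fun k => P (v (φ k))) atTop (𝓝 (P u₀)) :=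
    (P.continuous.tendsto _).comp (hv.comp hφ.tendsto_atTop)
  -- the `X⁺`-components are multiples of `P (v k) → P u₀ ≠ 0`, so they converge strongly
  obtain ⟨t, ht, hPx⟩ := exists_tendsto_of_weakly_tendsto_smul (a := fun k => s (φ k)) hPv
    (fun h => hu₀ (mem_of_proj_eq_zero hQm h)) (y := P x) fun ψ => by
      simpa [hs] using hx (ψ.comp P)
  have hT₁ : Tendsto (fun k => P (m (v (φ k)))) atTop (𝓝 (P x)) := by
    simpa [hs, hPx] using ht.smul hPv
  refine ⟨φ, x, hφ, ⟨hT₁, fun ψ => ?_⟩,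
    mem_rayAdd_of_proj_eq_smul hQm (ge_of_tendsto' ht fun k => hs0 _) hPx⟩
  simpa using (hx ψ).sub ((ψ.continuous.tendsto _).comp hT₁)

theorem exists_subseq_tendsto_mhat
    (hrefl : Function.Surjective (NormedSpace.inclusionInDoubleDual ℝ X))
    (hPt : ∀ x ∈ Xt, P x = 0) (hQm : ∀ x, x - P x ∈ Xt) (hJc : Continuous J)
    (hJI : ∀ x, J x = 1 / 2 * ‖P x‖ ^ 2 - I x)
    (hA2 : ∀ u v, TTendsto P u v → ∀ b < I v, ∀ᶠ n in atTop, b < I (u n))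
    (hA3 : ∀ u v, TTendsto P u v → Tendsto (fun n => I (u n)) atTop (𝓝 (I v)) →
      Tendsto u atTop (𝓝 v))
    (hm_mem : ∀ u ∉ Xt, m u ∈ rayAdd Xt u)
    (hm_max : ∀ u ∉ Xt, ∀ w ∈ rayAdd Xt u, w ≠ m u → J w < J (m u))
    (hm_bdd : ∀ K : Set X, IsCompact K → (∀ x ∈ K, x ∉ Xt) →
      Bornology.IsBounded (m '' K))
    {v : ℕ → X} {u₀ : X} (hv : Tendsto v atTop (𝓝 u₀)) (hvXt : ∀ k, v k ∉ Xt) (hu₀ : u₀ ∉ Xt) :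
    ∃ φ : ℕ → ℕ, StrictMono φ ∧ Tendsto (fun k => m (v (φ k))) atTop (𝓝 (m u₀)) := by
  obtain ⟨φ, x, hφ, hT, hx⟩ := exists_subseq_TTendsto_mhat hrefl hPt hQm hm_mem hm_bdd hv hvXt hu₀
  obtain ⟨s, hs, y, hy, hmu₀⟩ := hm_mem u₀ hu₀
  have h_cmp : Tendsto (fun k => J (s • v (φ k) + y)) atTop (𝓝 (J (m u₀))) := by
    rw [hmu₀]
    exact (hJc.tendsto _).comp (((hv.comp hφ.tendsto_atTop).const_smul s).add_const y)
  have h_le (k : ℕ) : J (s • v (φ k) + y) ≤ J (m (v (φ k))) :=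
    le_J_mhat hm_max (hvXt _) ⟨s, hs, y, hy, rfl⟩
  have hJx : J x ≤ J (m u₀) := le_J_mhat hm_max hu₀ hx
  have h_conv : Tendsto (fun k => m (v (φ k))) atTop (𝓝 x) :=
    hT.tendsto hJI hA2 hA3 fun b hb =>
      (h_cmp.eventually (lt_mem_nhds (hb.trans_le hJx))).mono fun k hk => hk.trans_le (h_le k)
  have hx_eq : x = m u₀ := by
    by_contra hne
    have := le_of_tendsto_of_tendsto' h_cmp ((hJc.tendsto x).comp h_conv) h_le
    exact (hm_max u₀ hu₀ x hx hne).not_ge this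
  exact ⟨φ, hφ, hx_eq ▸ h_conv⟩

theorem continuousOn_mhat
    (hrefl : Function.Surjective (NormedSpace.inclusionInDoubleDual ℝ X))
    (hPt : ∀ x ∈ Xt, P x = 0) (hQm : ∀ x, x - P x ∈ Xt) (hJc : Continuous J)
    (hJI : ∀ x, J x = 1 / 2 * ‖P x‖ ^ 2 - I x)
    (hA2 : ∀ u v, TTendsto P u v → ∀ b < I v, ∀ᶠ n in atTop, b < I (u n))
    (hA3 : ∀ u v, TTendsto P u v → Tendsto (fun n => I (u n)) atTop (𝓝 (I v)) →
      Tendsto u atTop (𝓝 v))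
    (hm_mem : ∀ u ∉ Xt, m u ∈ rayAdd Xt u)
    (hm_max : ∀ u ∉ Xt, ∀ w ∈ rayAdd Xt u, w ≠ m u → J w < J (m u))
    (hm_bdd : ∀ K : Set X, IsCompact K → (∀ x ∈ K, x ∉ Xt) →
      Bornology.IsBounded (m '' K)) :
    ContinuousOn m (Xt : Set X)ᶜ := by
  intro u₀ hu₀
  refine tendsto_of_subseq_tendsto fun v hv => ?_
  obtain ⟨hv, hvXt⟩ := tendsto_nhdsWithin_iff.1 hv
  obtain ⟨N, hN⟩ := eventually_atTop.1 hvXt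
  obtain ⟨φ, -, hφ⟩ := exists_subseq_tendsto_mhat hrefl hPt hQm hJc hJI hA2 hA3 hm_mem hm_max
    hm_bdd (hv.comp (tendsto_add_atTop_nat N)) (fun k => hN _ (Nat.le_add_left N k)) hu₀
  exact ⟨fun k => φ k + N, hφ⟩

theorem proj_mhat_smul_eq (hPp : ∀ x ∈ Xp, P x = x) (hPt : ∀ x ∈ Xt, P x = 0)
    (hm_mem : ∀ u ∉ Xt, m u ∈ rayAdd Xt u) {x : X} {a : ℝ} (hx : x ∈ Xp) (ha : 0 ≤ a)
    (hax : a • x ∉ Xt) : P (m (a • x)) = (‖P (m (a • x))‖ / ‖x‖) • x := by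
  obtain ⟨σ, hσ, hPσ⟩ := exists_proj_eq_smul_of_mem_rayAdd hPt (hm_mem _ hax)
  refine eq_norm_div_norm_smul_of_eq_smul (mul_nonneg hσ ha) ?_
  rw [hPσ, hPp _ (Xp.smul_mem _ hx), smul_smul]

theorem neg_mul_norm_le_mul_J'_mhat (hJd : ∀ x, HasFDerivAt J (J' x) x) (hJ'c : Continuous J')
    (hPm : ∀ x, P x ∈ Xp) (hPp : ∀ x ∈ Xp, P x = x) (hPt : ∀ x ∈ Xt, P x = 0)
    (hQm : ∀ x, x - P x ∈ Xt) (hm_mem : ∀ u ∉ Xt, m u ∈ rayAdd Xt u)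
    (hm_max : ∀ u ∉ Xt, ∀ w ∈ rayAdd Xt u, w ≠ m u → J w < J (m u))
    (hm_cont : ContinuousOn m (Xt : Set X)ᶜ) {ε : ℝ} (hr : 0 < r) (hε : 0 ≤ ε) {w : X}
    (hwXp : w ∈ Xp) (hwr : ‖w‖ = r)
    (hw : ∀ w' ∈ Xp, ‖w'‖ = r → J (m w) ≤ J (m w') + ε * ‖w' - w‖) (z : X) :
    -(2 * ε * ‖P‖ * ‖z‖) ≤ ‖P (m w)‖ / r * J' (m w) z := by
  have hS {x : X} (hx : x ∈ Xp) (hxr : ‖x‖ = r) : x ∉ Xt :=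
    notMem_of_mem_of_norm_eq hPp hPt hr hx hxr
  set t : ℕ → ℝ := fun i => 1 / ((i : ℝ) + 1)
  have ht : Tendsto t atTop (𝓝 0) := tendsto_one_div_add_atTop_nhds_zero_nat
  have ht0 (i : ℕ) : 0 < t i := by positivity
  -- move `w` in the direction `P z` and retract radially onto the sphere
  set x : ℕ → X := fun i => w + t i • P z
  have hx : Tendsto x atTop (𝓝 w) := by simpa using tendsto_const_nhds.add (ht.smul_const (P z))
  have hxXp (i : ℕ) : x i ∈ Xp := Xp.add_mem hwXp (Xp.smul_mem _ (hPm z))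
  set ω : ℕ → X := fun i => (r / ‖x i‖) • x i
  have hωr : ∀ᶠ i in atTop, ‖ω i‖ = r :=
    (hx.eventually_ne (fun h => hS hwXp hwr (h ▸ Xt.zero_mem))).mono fun i hi => by
      simpa [ω, div_eq_mul_inv] using norm_smul_inv_norm' (𝕜 := ℝ) hr.le hi
  have hωw (i : ℕ) : ‖ω i - w‖ ≤ 2 * ‖P‖ * ‖z‖ * t i := by
    calc ‖ω i - w‖ ≤ 2 * ‖x i - w‖ := norm_smul_div_norm_sub_le hwr _
      _ = 2 * (t i * ‖P z‖) := by simp [x, norm_smul, (ht0 i).le]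
      _ ≤ 2 * (t i * (‖P‖ * ‖z‖)) := by gcongr; exact P.le_opNorm z
      _ = _ := by ring
  have hmω : Tendsto (fun i => m (ω i)) atTop (𝓝 (m w)) := by
    refine (hm_cont w (hS hwXp hwr)).tendsto.comp (tendsto_nhdsWithin_iff.2 ⟨?_,
      hωr.mono fun i hi => hS (Xp.smul_mem _ (hxXp i)) hi⟩)
    rw [tendsto_iff_norm_sub_tendsto_zero]
    exact squeeze_zero (fun _ => norm_nonneg _) hωw (by simpa using ht.const_mul (2 * ‖P‖ * ‖z‖))
  set c : ℕ → ℝ := fun i => ‖P (m (ω i))‖ / ‖x i‖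
  have hc : Tendsto c atTop (𝓝 (‖P (m w)‖ / r)) :=
    ((P.continuous.tendsto _).comp hmω).norm.div (hwr ▸ hx.norm) hr.ne'
  -- `m̂(ω i) - (t i * c i) • z` lies in `X̂(w)`, where `J` is at most `J (m̂ w)`
  have h_incr : ∀ᶠ i in atTop,
      -(2 * ε * ‖P‖ * ‖z‖ * t i) ≤ J (m (ω i)) - J (m (ω i) - (t i * c i) • z) := by
    filter_upwards [hωr] with i hri
    have hPi := proj_mhat_smul_eq hPp hPt hm_mem (hxXp i) (by positivity)
      (hS (Xp.smul_mem _ (hxXp i)) hri)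
    have h₁ : J (m (ω i) - (t i * c i) • z) ≤ J (m w) := by
      refine le_J_mhat hm_max (hS hwXp hwr)
        (mem_rayAdd_of_proj_eq_smul hQm (by positivity : 0 ≤ c i) ?_)
      rw [map_sub, hPi, map_smul, hPp w hwXp, smul_add, smul_smul, mul_comm, add_sub_cancel_right]
    have h₂ := hw (ω i) (Xp.smul_mem _ (hxXp i)) hri
    have h₃ := mul_le_mul_of_nonneg_left (hωw i) hε
    linarith
  exact (hasStrictFDerivAt_of_hasFDerivAt_of_continuousAt (Eventually.of_forall hJd)
    hJ'c.continuousAt).neg_le_mul_apply_of_seq hmω ht ht0 hc h_incr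

theorem norm_J'_mhat_le_of_ekeland (hJd : ∀ x, HasFDerivAt J (J' x) x) (hJ'c : Continuous J')
    (hPm : ∀ x, P x ∈ Xp) (hPp : ∀ x ∈ Xp, P x = x) (hPt : ∀ x ∈ Xt, P x = 0)
    (hQm : ∀ x, x - P x ∈ Xt) (hm_mem : ∀ u ∉ Xt, m u ∈ rayAdd Xt u)
    (hm_max : ∀ u ∉ Xt, ∀ w ∈ rayAdd Xt u, w ≠ m u → J w < J (m u))
    (hm_cont : ContinuousOn m (Xt : Set X)ᶜ) (hδ : 0 < δ) (hm_lb : ∀ u ∉ Xt, δ ≤ ‖P (m u)‖)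
    {ε : ℝ} (hr : 0 < r) (hε : 0 ≤ ε) {w : X} (hwXp : w ∈ Xp) (hwr : ‖w‖ = r)
    (hw : ∀ w' ∈ Xp, ‖w'‖ = r → J (m w) ≤ J (m w') + ε * ‖w' - w‖) :
    ‖J' (m w)‖ ≤ ε * (2 * ‖P‖ * r / δ) := by
  have hs : δ / r ≤ ‖P (m w)‖ / r :=
    div_le_div_of_nonneg_right (hm_lb w (notMem_of_mem_of_norm_eq hPp hPt hr hwXp hwr)) hr.le
  calc ‖J' (m w)‖ ≤ 2 * ε * ‖P‖ / (‖P (m w)‖ / r) :=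
        ContinuousLinearMap.norm_le_div_of_forall_neg_mul_le
          ((by positivity : 0 < δ / r).trans_le hs) (by positivity)
          (neg_mul_norm_le_mul_J'_mhat hJd hJ'c hPm hPp hPt hQm hm_mem hm_max hm_cont hr hε hwXp
            hwr hw)
    _ ≤ 2 * ε * ‖P‖ / (δ / r) := div_le_div_of_nonneg_left (by positivity) (by positivity) hs
    _ = ε * (2 * ‖P‖ * r / δ) := by field_simp

theorem exists_ekeland_point_on_sphere [CompleteSpace X] (hXpcl : IsClosed (Xp : Set X))
    (hPm : ∀ x, P x ∈ Xp) (hPp : ∀ x ∈ Xp, P x = x) (hPt : ∀ x ∈ Xt, P x = 0)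
    (hQm : ∀ x, x - P x ∈ Xt) (hJc : Continuous J)
    (hm_unique : ∀ u ∉ Xt, ∀ w ∈ rayAdd Xt u, w ≠ 0 →
      (∀ z ∈ lineAdd Xt u, J' w z = 0) → w = m u)
    (hmN : ∀ u ∉ Xt, m u ∈ nehariPankov Xt J') (hm_cont : ContinuousOn m (Xt : Set X)ᶜ)
    (hbdd : BddBelow (J '' nehariPankov Xt J')) {ε : ℝ} (hr : 0 < r) (hε : 0 < ε) {u : X}
    (hu : u ∈ nehariPankov Xt J') :
    ∃ w ∈ Xp, ‖w‖ = r ∧ J (m w) ≤ J u ∧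
      ∀ w' ∈ Xp, ‖w'‖ = r → J (m w) ≤ J (m w') + ε * ‖w' - w‖ := by
  set S : Set X := {x | x ∈ Xp ∧ ‖x‖ = r}
  have hS (x : X) (hx : x ∈ S) : x ∉ Xt := notMem_of_mem_of_norm_eq hPp hPt hr hx.1 hx.2
  have : CompleteSpace S :=
    IsClosed.completeSpace_coe (hs := hXpcl.inter (isClosed_eq continuous_norm continuous_const))
  have hPu : ‖P u‖ ≠ 0 := norm_ne_zero_iff.2 fun h => hu.1 (mem_of_proj_eq_zero hQm h)
  set x₀ : X := (r / ‖P u‖) • P u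
  have hx₀ : x₀ ∈ S := ⟨Xp.smul_mem _ (hPm u), by
    rw [norm_smul, Real.norm_of_nonneg (by positivity), div_mul_cancel₀ _ hPu]⟩
  have hmx₀ : m x₀ = u := by
    refine mhat_eq_of_mem_rayAdd hm_unique (hS x₀ hx₀) hu
      (mem_rayAdd_of_proj_eq_smul hQm (t := ‖P u‖ / r) (by positivity) ?_)
    rw [hPp _ hx₀.1, smul_smul, show ‖P u‖ / r * (r / ‖P u‖) = 1 by field_simp, one_smul]
  obtain ⟨⟨w, hw⟩, hle, hmin⟩ := LowerSemicontinuous.exists_le_forall_le_add_mul_dist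
    (f := fun x : S => J (m x))
    (hJc.comp_continuousOn (hm_cont.mono hS)).domRestrict.lowerSemicontinuous
    (hbdd.mono (by rintro _ ⟨x, rfl⟩; exact ⟨m x, hmN x (hS x x.2), rfl⟩)) hε ⟨x₀, hx₀⟩
  exact ⟨w, hw.1, hw.2, hmx₀ ▸ hle, fun w' hw' hw'r => by
    simpa [Subtype.dist_eq, dist_eq_norm] using hmin ⟨w', hw', hw'r⟩⟩

theorem exists_PS_sequence [CompleteSpace X] (hXpcl : IsClosed (Xp : Set X))
    (hPm : ∀ x, P x ∈ Xp) (hPp : ∀ x ∈ Xp, P x = x) (hPt : ∀ x ∈ Xt, P x = 0)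
    (hQm : ∀ x, x - P x ∈ Xt) (hJd : ∀ x, HasFDerivAt J (J' x) x) (hJ'c : Continuous J')
    (hJ_pos : ∀ u ∈ nehariPankov Xt J', 0 < J u) (hm_mem : ∀ u ∉ Xt, m u ∈ rayAdd Xt u)
    (hm_unique : ∀ u ∉ Xt, ∀ w ∈ rayAdd Xt u, w ≠ 0 →
      (∀ z ∈ lineAdd Xt u, J' w z = 0) → w = m u)
    (hm_max : ∀ u ∉ Xt, ∀ w ∈ rayAdd Xt u, w ≠ m u → J w < J (m u))
    (hmN : ∀ u ∉ Xt, m u ∈ nehariPankov Xt J') (hm_cont : ContinuousOn m (Xt : Set X)ᶜ)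
    (hδ : 0 < δ) (hm_lb : ∀ u ∉ Xt, δ ≤ ‖P (m u)‖) (hr : 0 < r)
    (hN : (nehariPankov Xt J').Nonempty) :
    ∃ u : ℕ → X, (∀ n, u n ∈ nehariPankov Xt J') ∧
      Tendsto (fun n => J (u n)) atTop (𝓝 (sInf (J '' nehariPankov Xt J'))) ∧
      Tendsto (fun n => ‖J' (u n)‖) atTop (𝓝 0) := by
  have hJc : Continuous J := continuous_iff_continuousAt.2 fun x => (hJd x).continuousAt
  have hbdd : BddBelow (J '' nehariPankov Xt J') :=
    ⟨0, by rintro _ ⟨u, hu, rfl⟩; exact (hJ_pos u hu).le⟩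
  have hε (n : ℕ) : 0 < 1 / ((n : ℝ) + 1) := by positivity
  have hε_lim : Tendsto (fun n : ℕ => 1 / ((n : ℝ) + 1)) atTop (𝓝 0) :=
    tendsto_one_div_add_atTop_nhds_zero_nat
  have h_almost (n : ℕ) : ∃ u ∈ nehariPankov Xt J',
      J u < sInf (J '' nehariPankov Xt J') + 1 / ((n : ℝ) + 1) := by
    obtain ⟨_, ⟨u, hu, rfl⟩, h⟩ := Real.lt_sInf_add_pos (hN.image J) (hε n)
    exact ⟨u, hu, h⟩
  choose u hu hJu using h_almost
  choose w hwXp hwr hwJ hwmin using fun n =>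
    exists_ekeland_point_on_sphere hXpcl hPm hPp hPt hQm hJc hm_unique hmN hm_cont hbdd hr (hε n)
      (hu n)
  have hwN (n : ℕ) : m (w n) ∈ nehariPankov Xt J' :=
    hmN _ (notMem_of_mem_of_norm_eq hPp hPt hr (hwXp n) (hwr n))
  refine ⟨fun n => m (w n), hwN, ?_, ?_⟩
  · exact tendsto_of_tendsto_of_tendsto_of_le_of_le tendsto_const_nhds
      (by simpa using tendsto_const_nhds.add hε_lim) (fun n => csInf_le hbdd ⟨_, hwN n, rfl⟩)
      fun n => (hwJ n).trans (hJu n).le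
  · refine squeeze_zero (fun n => norm_nonneg _) (fun n => norm_J'_mhat_le_of_ekeland hJd hJ'c
      hPm hPp hPt hQm hm_mem hm_max hm_cont hδ hm_lb hr (hε n).le (hwXp n) (hwr n) (hwmin n)) ?_
    simpa using hε_lim.mul_const (2 * ‖P‖ * r / δ)

theorem eventually_lt_J_of_tendsto_proj (hPm : ∀ x, P x ∈ Xp) (hPp : ∀ x ∈ Xp, P x = x)
    (hPt : ∀ x ∈ Xt, P x = 0) (hQm : ∀ x, x - P x ∈ Xt) (hJc : Continuous J)
    (hm_unique : ∀ u ∉ Xt, ∀ w ∈ rayAdd Xt u, w ≠ 0 →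
      (∀ z ∈ lineAdd Xt u, J' w z = 0) → w = m u)
    (hm_max : ∀ u ∉ Xt, ∀ w ∈ rayAdd Xt u, w ≠ m u → J w < J (m u)) {q : ℕ → X}
    (hq : ∀ n, q n ∈ nehariPankov Xt J') {v : X}
    (hPq : Tendsto (fun n => P (q n)) atTop (𝓝 (P v))) :
    ∀ b < J v, ∀ᶠ n in atTop, b < J (q n) := by
  have h_le (n : ℕ) : J (P (q n) + (v - P v)) ≤ J (q n) := by
    calc J (P (q n) + (v - P v)) ≤ J (m (q n)) :=
          le_J_mhat hm_max (hq n).1 (mem_rayAdd_of_proj_eq_smul hQm zero_le_one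
            (by rw [map_add, hPp _ (hPm _), hPt _ (hQm v), add_zero, one_smul]))
      _ = J (q n) := by rw [mhat_eq_self hm_unique (hq n)]
  have h_lim : Tendsto (fun n => J (P (q n) + (v - P v))) atTop (𝓝 (J v)) := by
    have := (hJc.tendsto _).comp (hPq.add_const (v - P v))
    rwa [add_sub_cancel] at this
  exact fun b hb => (h_lim.eventually (lt_mem_nhds hb)).mono fun n hn => hn.trans_le (h_le n)

end NehariPankov

open NehariPankov

theorem groundstate_achieved_general
    {X : Type*} [NormedAddCommGroup X] [NormedSpace ℝ X] [CompleteSpace X]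
    -- X is reflexive
    (hrefl : Function.Surjective (NormedSpace.inclusionInDoubleDual ℝ X))
    -- topological direct sum decomposition X = X⁺ ⊕ X̃, with projection P onto X⁺ along X̃
    (Xp Xt : Submodule ℝ X)
    (hXpcl : IsClosed (Xp : Set X))
    (P : X →L[ℝ] X)
    (hPm : ∀ x : X, P x ∈ Xp) (hQm : ∀ x : X, x - P x ∈ Xt)
    (hPp : ∀ x ∈ Xp, P x = x) (hPt : ∀ x ∈ Xt, P x = 0)
    -- J, I of class C¹ with J(u) = ½‖u⁺‖² - I(u)
    (J I : X → ℝ) (J' : X → X →L[ℝ] ℝ)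
    (hJd : ∀ x, HasFDerivAt J (J' x) x) (hJ'c : Continuous J')
    (hJI : ∀ x : X, J x = (1 / 2) * ‖P x‖ ^ 2 - I x)
    -- (A1)
    (hI0 : I 0 = 0)
    -- (A2) : T-convergence implies liminf I(uₙ) ≥ I(v)
    (hA2 : ∀ (u : ℕ → X) (v : X),
      Tendsto (fun n => P (u n)) atTop (𝓝 (P v)) →
      (∀ φ : X →L[ℝ] ℝ, Tendsto (fun n => φ (u n - P (u n))) atTop (𝓝 (φ (v - P v)))) →
      ∀ b : ℝ, b < I v → ∀ᶠ n in atTop, b < I (u n))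
    -- (A3)
    (hA3 : ∀ (u : ℕ → X) (v : X),
      Tendsto (fun n => P (u n)) atTop (𝓝 (P v)) →
      (∀ φ : X →L[ℝ] ℝ, Tendsto (fun n => φ (u n - P (u n))) atTop (𝓝 (φ (v - P v)))) →
      Tendsto (fun n => I (u n)) atTop (𝓝 (I v)) →
      Tendsto u atTop (𝓝 v))
    -- (A4)
    (r a : ℝ) (hr : 0 < r)
    (ha_def : a = sInf (J '' {x : X | x ∈ Xp ∧ ‖x‖ = r})) (ha : 0 < a)
    -- (A5) : m̂(u) is the unique nontrivial critical point of J|_{X(u)} in X̂(u), and the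
    -- unique global maximum of J on X̂(u)
    (m : X → X)
    (hm_mem : ∀ u ∉ Xt, ∃ t : ℝ, 0 ≤ t ∧ ∃ v ∈ Xt, m u = t • u + v)
    (hm_ne : ∀ u ∉ Xt, m u ≠ 0)
    (hm_crit : ∀ u ∉ Xt, ∀ z : X, (∃ t : ℝ, ∃ v ∈ Xt, z = t • u + v) → J' (m u) z = 0)
    (hm_unique : ∀ u ∉ Xt, ∀ w : X, (∃ t : ℝ, 0 ≤ t ∧ ∃ v ∈ Xt, w = t • u + v) → w ≠ 0 →
      (∀ z : X, (∃ t : ℝ, ∃ v ∈ Xt, z = t • u + v) → J' w z = 0) → w = m u)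
    (hm_max : ∀ u ∉ Xt, ∀ w : X, (∃ t : ℝ, 0 ≤ t ∧ ∃ v ∈ Xt, w = t • u + v) →
      w ≠ m u → J w < J (m u))
    -- (A6)
    (δ : ℝ) (hδ : 0 < δ) (hm_lb : ∀ u ∉ Xt, δ ≤ ‖P (m u)‖)
    (hm_bdd : ∀ K : Set X, IsCompact K → (∀ x ∈ K, x ∉ Xt) →
      Bornology.IsBounded (m '' K))
    -- (PS)_{c₀}^T condition on the Nehari–Pankov manifold N
    (hPS : ∀ u : ℕ → X,
      (∀ n, (u n) ∈ {u : X | u ∉ Xt ∧ J' u u = 0 ∧ ∀ v ∈ Xt, J' u v = 0}) →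
      Tendsto (fun n => J (u n)) atTop
        (𝓝 (sInf (J '' {u : X | u ∉ Xt ∧ J' u u = 0 ∧ ∀ v ∈ Xt, J' u v = 0}))) →
      Tendsto (fun n => ‖J' (u n)‖) atTop (𝓝 0) →
      ∃ (φ : ℕ → ℕ) (v : X), StrictMono φ ∧
        Tendsto (fun n => P (u (φ n))) atTop (𝓝 (P v)) ∧
        ∀ ψ : X →L[ℝ] ℝ,
          Tendsto (fun n => ψ (u (φ n) - P (u (φ n)))) atTop (𝓝 (ψ (v - P v)))) :
    ∃ u : X, u ∈ {u : X | u ∉ Xt ∧ J' u u = 0 ∧ ∀ v ∈ Xt, J' u v = 0} ∧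
      J' u = 0 ∧ J u = sInf (J '' {u : X | u ∉ Xt ∧ J' u u = 0 ∧ ∀ v ∈ Xt, J' u v = 0}) := by
  have hJc : Continuous J := continuous_iff_continuousAt.2 fun x => (hJd x).continuousAt
  have hA2' (u v) (h : TTendsto P u v) := hA2 u v h.1 h.2
  have hA3' (u v) (h : TTendsto P u v) := hA3 u v h.1 h.2
  have hmN (u : X) (hu : u ∉ Xt) := mhat_mem_nehariPankov hPt hδ hm_lb hm_mem hm_crit hu
  have hJ_pos (u : X) (hu : u ∈ nehariPankov Xt J') :=
    J_pos_of_mem_nehariPankov (by simp [hJI, hI0]) hm_ne hm_unique hm_max hu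
  have hm_cont := continuousOn_mhat hrefl hPt hQm hJc hJI hA2' hA3' hm_mem hm_max hm_bdd
  obtain ⟨u, huN, huJ, huJ'⟩ := exists_PS_sequence hXpcl hPm hPp hPt hQm hJd hJ'c hJ_pos hm_mem
    hm_unique hm_max hmN hm_cont hδ hm_lb hr (nonempty_nehariPankov hPp hPt hmN hr ha_def ha)
  obtain ⟨φ, v, hφ, hPv, hψv⟩ := hPS u huN huJ huJ'
  have hconv : Tendsto (fun n => u (φ n)) atTop (𝓝 v) := TTendsto.tendsto hJI hA2' hA3' ⟨hPv, hψv⟩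
    (eventually_lt_J_of_tendsto_proj hPm hPp hPt hQm hJc hm_unique hm_max (fun n => huN (φ n)) hPv)
  have hJ'v : J' v = 0 := norm_eq_zero.1 <|
    tendsto_nhds_unique ((hJ'c.tendsto v).comp hconv).norm (huJ'.comp hφ.tendsto_atTop)
  have hvXt : v ∉ Xt := fun hv => by
    have := ge_of_tendsto hPv.norm (Eventually.of_forall fun n =>
      le_norm_proj_of_mem_nehariPankov hm_lb hm_unique (huN (φ n)))
    rw [hPt v hv, norm_zero] at this
    exact hδ.not_ge this
  exact ⟨v, ⟨hvXt, by simp [hJ'v], by simp [hJ'v]⟩, hJ'v,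
    tendsto_nhds_unique ((hJc.tendsto v).comp hconv) (huJ.comp hφ.tendsto_atTop)⟩

/-- Under (A1)–(A6), if `J` satisfies the `(PS)_{c₀}^T`-condition in `N`,
then `c₀ = inf_N J` is achieved by a critical point of `J` lying on `N`. -/
theorem groundstate_achieved
    {X : Type*} [NormedAddCommGroup X] [NormedSpace ℝ X] [CompleteSpace X]
    -- X is reflexive
    (hrefl : Function.Surjective (NormedSpace.inclusionInDoubleDual ℝ X))
    -- topological direct sum decomposition X = X⁺ ⊕ X̃, with projection P onto X⁺ along X̃
    (Xp Xt : Submodule ℝ X)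
    (hXpcl : IsClosed (Xp : Set X)) (hXtcl : IsClosed (Xt : Set X))
    (P : X →L[ℝ] X)
    (hPm : ∀ x : X, P x ∈ Xp) (hQm : ∀ x : X, x - P x ∈ Xt)
    (hPp : ∀ x ∈ Xp, P x = x) (hPt : ∀ x ∈ Xt, P x = 0)
    -- ‖u‖² = ‖u⁺‖² + ‖ũ‖²
    (hnorm : ∀ x : X, ‖x‖ ^ 2 = ‖P x‖ ^ 2 + ‖x - P x‖ ^ 2)
    -- u ↦ ‖u‖² is C¹ on X⁺
    (hC1 : ContDiffOn ℝ 1 (fun x : X => ‖x‖ ^ 2) (Xp : Set X))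
    -- J, I of class C¹ with J(u) = ½‖u⁺‖² - I(u)
    (J I : X → ℝ) (J' I' : X → X →L[ℝ] ℝ)
    (hJd : ∀ x, HasFDerivAt J (J' x) x) (hJ'c : Continuous J')
    (hId : ∀ x, HasFDerivAt I (I' x) x) (hI'c : Continuous I')
    (hJI : ∀ x : X, J x = (1 / 2) * ‖P x‖ ^ 2 - I x)
    -- (A1)
    (hI0 : I 0 = 0) (hIpos : ∀ x : X, 0 ≤ I x)
    -- (A2) : T-convergence implies liminf I(uₙ) ≥ I(v)
    (hA2 : ∀ (u : ℕ → X) (v : X),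
      Tendsto (fun n => P (u n)) atTop (𝓝 (P v)) →
      (∀ φ : X →L[ℝ] ℝ, Tendsto (fun n => φ (u n - P (u n))) atTop (𝓝 (φ (v - P v)))) →
      ∀ b : ℝ, b < I v → ∀ᶠ n in atTop, b < I (u n))
    -- (A3)
    (hA3 : ∀ (u : ℕ → X) (v : X),
      Tendsto (fun n => P (u n)) atTop (𝓝 (P v)) →
      (∀ φ : X →L[ℝ] ℝ, Tendsto (fun n => φ (u n - P (u n))) atTop (𝓝 (φ (v - P v)))) →
      Tendsto (fun n => I (u n)) atTop (𝓝 (I v)) →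
      Tendsto u atTop (𝓝 v))
    -- (A4)
    (r a : ℝ) (hr : 0 < r)
    (ha_def : a = sInf (J '' {x : X | x ∈ Xp ∧ ‖x‖ = r})) (ha : 0 < a)
    -- (A5) : m̂(u) is the unique nontrivial critical point of J|_{X(u)} in X̂(u), and the
    -- unique global maximum of J on X̂(u)
    (m : X → X)
    (hm_mem : ∀ u ∉ Xt, ∃ t : ℝ, 0 ≤ t ∧ ∃ v ∈ Xt, m u = t • u + v)
    (hm_ne : ∀ u ∉ Xt, m u ≠ 0)
    (hm_crit : ∀ u ∉ Xt, ∀ z : X, (∃ t : ℝ, ∃ v ∈ Xt, z = t • u + v) → J' (m u) z = 0)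
    (hm_unique : ∀ u ∉ Xt, ∀ w : X, (∃ t : ℝ, 0 ≤ t ∧ ∃ v ∈ Xt, w = t • u + v) → w ≠ 0 →
      (∀ z : X, (∃ t : ℝ, ∃ v ∈ Xt, z = t • u + v) → J' w z = 0) → w = m u)
    (hm_max : ∀ u ∉ Xt, ∀ w : X, (∃ t : ℝ, 0 ≤ t ∧ ∃ v ∈ Xt, w = t • u + v) →
      w ≠ m u → J w < J (m u))
    -- (A6)
    (δ : ℝ) (hδ : 0 < δ) (hm_lb : ∀ u ∉ Xt, δ ≤ ‖P (m u)‖)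
    (hm_bdd : ∀ K : Set X, IsCompact K → (∀ x ∈ K, x ∉ Xt) →
      Bornology.IsBounded (m '' K))
    -- (PS)_{c₀}^T condition on the Nehari–Pankov manifold N
    (hPS : ∀ u : ℕ → X,
      (∀ n, (u n) ∈ {u : X | u ∉ Xt ∧ J' u u = 0 ∧ ∀ v ∈ Xt, J' u v = 0}) →
      Tendsto (fun n => J (u n)) atTop
        (𝓝 (sInf (J '' {u : X | u ∉ Xt ∧ J' u u = 0 ∧ ∀ v ∈ Xt, J' u v = 0}))) →
      Tendsto (fun n => ‖J' (u n)‖) atTop (𝓝 0) →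
      ∃ (φ : ℕ → ℕ) (v : X), StrictMono φ ∧
        Tendsto (fun n => P (u (φ n))) atTop (𝓝 (P v)) ∧
        ∀ ψ : X →L[ℝ] ℝ,
          Tendsto (fun n => ψ (u (φ n) - P (u (φ n)))) atTop (𝓝 (ψ (v - P v)))) :
    ∃ u : X, u ∈ {u : X | u ∉ Xt ∧ J' u u = 0 ∧ ∀ v ∈ Xt, J' u v = 0} ∧
      J' u = 0 ∧ J u = sInf (J '' {u : X | u ∉ Xt ∧ J' u u = 0 ∧ ∀ v ∈ Xt, J' u v = 0}) :=
  groundstate_achieved_general hrefl Xp Xt hXpcl P hPm hQm hPp hPt J I J' hJd hJ'c hJI hI0 hA2 hA3 r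
    a hr ha_def ha m hm_mem hm_ne hm_crit hm_unique hm_max δ hδ hm_lb hm_bdd hPS
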